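/- arXiv:1608.07217 — 5 statements merged into one kernel-verified Lean document; each statement's English description precedes it below -/
import Mathlib

section
/- Let a, b ∈ ℂ[[x,y]] be formal power series, not both zero, and consider the 1-form ω = a dx + b dy. Suppose the quotient ring ℂ[[x,y]]/(a,b) is a finite-dimensional ℂ-vector space, of dimension μ (the Milnor number of the foliation defined by ω). Let ν = min(ord(a), ord(b)) be the algebraic multiplicity of ω. Then ν(ν+1)/2 ≤ μ. (This is the paper's claim that the algebraic multiplicity of a foliation is topologically bounded.) -/
/-! Every element of `(a, b)` has order at least `ν`, so no nonzero combination of the monomials of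
degree `< ν` lies in `(a, b)`: these `ν(ν+1)/2` monomials stay linearly independent in the quotient. -/

open Finset

namespace MvPowerSeries

variable {σ R : Type*} [CommRing R]

theorem le_order_of_mem_span {S : Set (MvPowerSeries σ R)} {n : ℕ∞}
    (hS : ∀ f ∈ S, n ≤ f.order) {g : MvPowerSeries σ R} (hg : g ∈ Ideal.span S) :
    n ≤ g.order := by
  induction hg using Submodule.span_induction with
  | mem f hf => exact hS f hf
  | zero => simp
  | add f g _ _ hf hg => exact (le_min hf hg).trans min_order_le_add
  | smul r f _ hf => exact (hf.trans le_add_self).trans (smul_eq_mul r f ▸ le_order_mul)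

theorem linearIndependent_mk_monomial_of_le_order {I : Ideal (MvPowerSeries σ R)} {n : ℕ}
    (hI : ∀ g ∈ I, (n : ℕ∞) ≤ g.order) {s : Finset (σ →₀ ℕ)} (hs : ∀ e ∈ s, e.degree < n) :
    LinearIndependent R fun e : s => Ideal.Quotient.mkₐ R I (monomial e.1 1) := by
  classical
  rw [Fintype.linearIndependent_iff]
  intro c hc e
  have hmem : ∑ t : s, c t • monomial t.1 (1 : R) ∈ I := by
    rw [← Ideal.Quotient.eq_zero_iff_mem, ← Ideal.Quotient.mkₐ_eq_mk R, map_sum]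
    simpa only [map_smul] using hc
  have hcoeff := coeff_of_lt_order ((Nat.cast_lt.2 (hs e e.2)).trans_le (hI _ hmem))
  rw [map_sum, sum_eq_single e] at hcoeff
  · simpa using hcoeff
  · intro t _ hte
    simp [coeff_monomial, Subtype.val_injective.ne hte.symm]
  · simp

end MvPowerSeries

def lowDegreeExponents (σ : Type*) [Fintype σ] [DecidableEq σ] (n : ℕ) : Finset (σ →₀ ℕ) :=
  (range n).biUnion fun d => univ.finsuppAntidiag d

theorem mem_lowDegreeExponents {σ : Type*} [Fintype σ] [DecidableEq σ] {n : ℕ} {e : σ →₀ ℕ} :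
    e ∈ lowDegreeExponents σ n ↔ e.degree < n := by
  simp [lowDegreeExponents, Finsupp.degree_eq_sum]

theorem card_lowDegreeExponents (σ : Type*) [Fintype σ] [DecidableEq σ] (n : ℕ) :
    #(lowDegreeExponents σ n) = ∑ d ∈ range n, (Fintype.card σ + d - 1).choose d := by
  rw [lowDegreeExponents, card_biUnion]
  · simp [card_finsuppAntidiag_nat_eq_choose]
  · intro d _ d' _ hdd'
    exact disjoint_left.2 fun e he he' => hdd' ((mem_finsuppAntidiag.1 he).1.symm.trans
      (mem_finsuppAntidiag.1 he').1)

theorem card_lowDegreeExponents_fin_two (n : ℕ) :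
    #(lowDegreeExponents (Fin 2) n) = n * (n + 1) / 2 := by
  rw [card_lowDegreeExponents, Fintype.card_fin]
  have : ∑ d ∈ range n, (2 + d - 1).choose d = ∑ d ∈ range (n + 1), d := by
    rw [sum_range_succ']
    simp [add_comm]
  rw [this, sum_range_id, Nat.add_sub_cancel, mul_comm]

theorem stmt_0_general (a b : MvPowerSeries (Fin 2) ℂ) (ν : ℕ)
    (hν : (ν : ℕ∞) = min a.order b.order)
    [FiniteDimensional ℂ
      (MvPowerSeries (Fin 2) ℂ ⧸ (Ideal.span {a, b} : Ideal (MvPowerSeries (Fin 2) ℂ)))]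
    (μ : ℕ)
    (hμ : μ = Module.finrank ℂ
      (MvPowerSeries (Fin 2) ℂ ⧸ (Ideal.span {a, b} : Ideal (MvPowerSeries (Fin 2) ℂ)))) :
    ν * (ν + 1) / 2 ≤ μ := by
  have hord : ∀ g ∈ Ideal.span {a, b}, (ν : ℕ∞) ≤ g.order :=
    fun g => MvPowerSeries.le_order_of_mem_span (by simp [hν])
  have hli := MvPowerSeries.linearIndependent_mk_monomial_of_le_order hord
    (s := lowDegreeExponents (Fin 2) ν) fun e => mem_lowDegreeExponents.1
  rw [hμ, ← card_lowDegreeExponents_fin_two, ← Fintype.card_coe]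
  exact hli.fintype_card_le_finrank

/-- **Topological boundedness of the algebraic multiplicity.**
If `ω = a dx + b dy` (with `a`, `b` formal power series in two variables, not both zero)
defines a foliation whose Milnor number `μ = dim_ℂ ℂ[[x,y]]/(a,b)` is finite, and
`ν = min(ord a, ord b)` is the algebraic multiplicity, then `ν(ν+1)/2 ≤ μ`. -/
theorem stmt_0 (a b : MvPowerSeries (Fin 2) ℂ) (hab : ¬(a = 0 ∧ b = 0)) (ν : ℕ)
    (hν : (ν : ℕ∞) = min a.order b.order)
    [FiniteDimensional ℂ
      (MvPowerSeries (Fin 2) ℂ ⧸ (Ideal.span {a, b} : Ideal (MvPowerSeries (Fin 2) ℂ)))]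
    (μ : ℕ)
    (hμ : μ = Module.finrank ℂ
      (MvPowerSeries (Fin 2) ℂ ⧸ (Ideal.span {a, b} : Ideal (MvPowerSeries (Fin 2) ℂ)))) :
    ν * (ν + 1) / 2 ≤ μ :=
  stmt_0_general a b ν hν μ hμ
end

section
/- Let γ(t) = (x(t), y(t)) be a formal parametrization with x ≠ 0, y ≠ 0 and ord_t(x) < ord_t(y), and set u(t) := y(t)/x(t) ∈ ℂ[[t]] (so u(0) = 0 and u ≠ 0). Let P, Q ∈ ℂ[[x,y]] satisfy the invariance relation (P∘γ)·x'(t) + (Q∘γ)·y'(t) = 0, with Q∘γ ≠ 0. Then ord_t(P∘γ + u·(Q∘γ)) = ord_t(u) + ord_t(Q∘γ). -/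
/-!
Since `y = x u`, Leibniz gives `y' = x u' + u x'`, so the invariance relation becomes
`(P∘γ + u · Q∘γ) · x' = -(Q∘γ) · x · u'`. Taking orders and using `ord f' + 1 = ord f` for
`f(0) = 0` (once for `x`, once for `u`), the common summand `ord x'` cancels.
-/

/-- Substitution `F(x(t), y(t))` of a two-variable formal power series `F ∈ ℂ[[x,y]]`
along a pair of one-variable formal power series (a formal parametrization `γ = (x, y)`;
this is the usual substitution when `x` and `y` have zero constant term, since then
`coeff n (x ^ i * y ^ j) = 0` whenever `i + j > n`). -/
noncomputable def pcomp (F : MvPowerSeries (Fin 2) ℂ) (x y : PowerSeries ℂ) : PowerSeries ℂ :=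
  PowerSeries.mk fun n => ∑ p ∈ Finset.range (n + 1) ×ˢ Finset.range (n + 1),
    MvPowerSeries.coeff (Finsupp.single (0 : Fin 2) p.1 + Finsupp.single (1 : Fin 2) p.2) F *
      PowerSeries.coeff n (x ^ p.1 * y ^ p.2)

namespace PowerSeries

variable {R : Type*} [CommSemiring R] [IsAddTorsionFree R]

theorem coeff_derivative_eq_zero_iff (f : R⟦X⟧) (n : ℕ) :
    coeff n (d⁄dX R f) = 0 ↔ coeff (n + 1) f = 0 := by
  rw [coeff_derivative, mul_comm, ← Nat.cast_succ, ← nsmul_eq_mul,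
    nsmul_eq_zero_iff_right n.succ_ne_zero]

theorem order_derivative_add_one {f : R⟦X⟧} (hf : constantCoeff f = 0) :
    (d⁄dX R f).order + 1 = f.order := by
  obtain ⟨hne, hzero⟩ := order_eq.mp (rfl : (d⁄dX R f).order = _)
  refine (order_eq.mpr ⟨fun i hi => ?_, fun i hi => ?_⟩).symm
  · cases i with
    | zero => exact absurd hi.symm (by simp)
    | succ j =>
      refine mt (coeff_derivative_eq_zero_iff f j).mpr (hne j ?_)
      push_cast at hi
      exact ENat.add_left_injective_of_ne_top ENat.one_ne_top hi
  · cases i with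
    | zero => simpa using hf
    | succ j =>
      refine (coeff_derivative_eq_zero_iff f j).mp (hzero j ?_)
      push_cast at hi
      exact (ENat.add_lt_add_iff_right ENat.one_ne_top).mp hi

theorem order_derivative_ne_top {f : R⟦X⟧} (hf : constantCoeff f = 0) (hf0 : f ≠ 0) :
    (d⁄dX R f).order ≠ ⊤ := fun h =>
  hf0 <| order_eq_top.mp <| by rw [← order_derivative_add_one hf, h, top_add]

end PowerSeries

theorem stmt_3_general (x y u : PowerSeries ℂ) (hx0 : PowerSeries.constantCoeff x = 0)
    (hx : x ≠ 0) (hyu : y = x * u)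
    (hu0 : PowerSeries.constantCoeff u = 0)
    (P Q : MvPowerSeries (Fin 2) ℂ)
    (hinv : pcomp P x y * x.derivativeFun + pcomp Q x y * y.derivativeFun = 0) :
    (pcomp P x y + u * pcomp Q x y).order = u.order + (pcomp Q x y).order := by
  open PowerSeries in
  set A := pcomp P x y
  set B := pcomp Q x y
  change A * d⁄dX ℂ x + B * d⁄dX ℂ y = 0 at hinv
  have hdy : d⁄dX ℂ y = x * d⁄dX ℂ u + u * d⁄dX ℂ x := by
    rw [hyu]
    exact (d⁄dX ℂ).leibniz x u
  have hfactored : (A + u * B) * d⁄dX ℂ x = -(B * (x * d⁄dX ℂ u)) := by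
    rw [hdy] at hinv
    linear_combination hinv
  have horder := congrArg order hfactored
  rw [order_mul, order_neg, order_mul, order_mul, ← order_derivative_add_one hx0] at horder
  rw [← order_derivative_add_one hu0]
  apply ENat.add_left_injective_of_ne_top (order_derivative_ne_top hx0 hx)
  simp only [horder]
  ring

/-- Let `γ = (x, y)` be a formal parametrization with `x ≠ 0`, `y ≠ 0`,
`ord_t x < ord_t y`, and write `y = x·u` (so `u(0) = 0` and `u ≠ 0`). If `γ` is
invariant for `ω = P dx + Q dy` and `Q∘γ ≠ 0`, then
`ord_t(P∘γ + u·(Q∘γ)) = ord_t u + ord_t(Q∘γ)`. -/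
theorem stmt_3 (x y u : PowerSeries ℂ) (hx0 : PowerSeries.constantCoeff x = 0)
    (hy0 : PowerSeries.constantCoeff y = 0) (hx : x ≠ 0) (hy : y ≠ 0)
    (hord : x.order < y.order) (hyu : y = x * u)
    (hu0 : PowerSeries.constantCoeff u = 0) (hu : u ≠ 0)
    (P Q : MvPowerSeries (Fin 2) ℂ)
    (hinv : pcomp P x y * x.derivativeFun + pcomp Q x y * y.derivativeFun = 0)
    (hQ : pcomp Q x y ≠ 0) :
    (pcomp P x y + u * pcomp Q x y).order = u.order + (pcomp Q x y).order :=
  stmt_3_general x y u hx0 hx hyu hu0 P Q hinv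
end

section
/- (Polar excess versus GSV-index, local identity.) Let P, Q, f, g, k, ηₓ, η_y ∈ ℂ[[x,y]] satisfy the decomposition g·P = k·∂ₓf + f·ηₓ and g·Q = k·∂_yf + f·η_y (i.e., gω = k df + fη for ω = P dx + Q dy). Let γ be a formal parametrization with f∘γ = 0, g∘γ ≠ 0, k∘γ ≠ 0, and (∂ₓf∘γ, ∂_yf∘γ) ≠ (0,0). Then for every (a,b) ∈ ℂ²: (g∘γ)·((aP + bQ)∘γ) = (k∘γ)·((a∂ₓf + b∂_yf)∘γ). Consequently min(ord_t(P∘γ), ord_t(Q∘γ)) = ord_t(k∘γ) − ord_t(g∘γ) + min(ord_t(∂ₓf∘γ), ord_t(∂_yf∘γ)); equivalently, for any H ∈ ℂ[[x,y]] with H∘γ ≠ 0, the relative polar excess satisfies (𝒫^{ω}, γ) − (𝒫^{d(f/H)}, γ) = [ord_t(k∘γ) − ord_t(g∘γ)] + ord_t(H∘γ), which is the paper's identity var^rel(F,B) = GSV(F,B) + ((F)_∞, B). -/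
/-- Formal partial derivative `∂F/∂xᵢ` of a two-variable formal power series. -/
noncomputable def pderiv2 (i : Fin 2) (F : MvPowerSeries (Fin 2) ℂ) : MvPowerSeries (Fin 2) ℂ :=
  fun d => ((d i : ℂ) + 1) * MvPowerSeries.coeff (d + Finsupp.single i 1) F

/-!
Substituting the parametrization is a ring homomorphism `φ = (· ∘ γ)` (it is
`MvPowerSeries.subst`), and `φ f = 0` kills the `f·η` term of the decomposition, so
`φ g · φ P = φ k · φ(∂ₓf)` and `φ g · φ Q = φ k · φ(∂_yf)`. Since `ℂ⟦t⟧` is a domain, the order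
is additive; taking the minimum of the two order identities gives the second claim. For
`d(f/H)` the terms `f·∂H` vanish along `γ` as well, so its components are `φ H · φ(∂f)` over
`(φ H)²`, and its polar number is that of `df` minus `ord_t (φ H)`.
-/

namespace PowerSeries

theorem coeff_pow_mul_pow_of_lt {R : Type*} [CommRing R] {x y : R⟦X⟧}
    (hx : constantCoeff x = 0) (hy : constantCoeff y = 0) {i j n : ℕ} (h : n < i + j) :
    coeff n (x ^ i * y ^ j) = 0 := by
  have hdvd : X ^ (i + j) ∣ x ^ i * y ^ j := by
    rw [pow_add]
    exact mul_dvd_mul (pow_dvd_pow_of_dvd (X_dvd_iff.2 hx) i)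
      (pow_dvd_pow_of_dvd (X_dvd_iff.2 hy) j)
  exact X_pow_dvd_iff.1 hdvd n h

theorem min_order_ne_top {R : Type*} [Semiring R] {A B : R⟦X⟧} (hAB : ¬(A = 0 ∧ B = 0)) :
    min A.order B.order ≠ ⊤ := by
  rwa [ne_eq, min_eq_top, order_eq_top, order_eq_top]

variable {R : Type*} [Semiring R] [NoZeroDivisors R]

theorem order_add_min_order_eq {G K P Q A B : R⟦X⟧} (hP : G * P = K * A)
    (hQ : G * Q = K * B) :
    G.order + min P.order Q.order = K.order + min A.order B.order := by
  rw [← min_add_add_left, ← min_add_add_left, ← order_mul, ← order_mul, ← order_mul,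
    ← order_mul, hP, hQ]

theorem toNat_min_order_eq {G K P Q A B : R⟦X⟧} (hG : G ≠ 0) (hK : K ≠ 0)
    (hAB : ¬(A = 0 ∧ B = 0)) (hP : G * P = K * A) (hQ : G * Q = K * B) :
    ((min P.order Q.order).toNat : ℤ) =
      (K.order.toNat : ℤ) - G.order.toNat + (min A.order B.order).toNat := by
  have hsum := order_add_min_order_eq hP hQ
  lift G.order to ℕ using order_eq_top.not.2 hG with g
  lift K.order to ℕ using order_eq_top.not.2 hK with k
  lift min A.order B.order to ℕ using min_order_ne_top hAB with m
  have hPQ : min P.order Q.order ≠ ⊤ := by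
    rintro htop
    rw [htop, add_top] at hsum
    exact ENat.natCast_ne_top _ (by exact_mod_cast hsum.symm)
  lift min P.order Q.order to ℕ using hPQ with n
  have : g + n = k + m := by exact_mod_cast hsum
  simp only [ENat.toNat_natCast]
  omega

theorem toNat_order_mul {c d : R⟦X⟧} (hc : c ≠ 0) (hd : d ≠ 0) :
    (c * d).order.toNat = c.order.toNat + d.order.toNat := by
  rw [order_mul, ENat.toNat_add (order_eq_top.not.2 hc) (order_eq_top.not.2 hd)]

theorem toNat_min_order_mul_left {c A B : R⟦X⟧} (hc : c ≠ 0) (hAB : ¬(A = 0 ∧ B = 0)) :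
    (min (c * A).order (c * B).order).toNat = c.order.toNat + (min A.order B.order).toNat := by
  rw [order_mul, order_mul, min_add_add_left,
    ENat.toNat_add (order_eq_top.not.2 hc) (min_order_ne_top hAB)]

end PowerSeries

section Substitution

open PowerSeries

variable {x y : ℂ⟦X⟧}

theorem hasSubst_pair (hx : constantCoeff x = 0) (hy : constantCoeff y = 0) :
    MvPowerSeries.HasSubst ![x, y] :=
  MvPowerSeries.hasSubst_of_constantCoeff_zero fun i => by fin_cases i <;> assumption

theorem finTwoArrowEquiv'_symm_apply_eq_single_add_single {M : Type*} [AddZeroClass M]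
    (p : M × M) :
    (finTwoArrowEquiv' M).symm p = Finsupp.single 0 p.1 + Finsupp.single 1 p.2 := by
  ext i
  fin_cases i <;> simp

theorem pcomp_eq_substAlgHom (hx : constantCoeff x = 0) (hy : constantCoeff y = 0)
    (F : MvPowerSeries (Fin 2) ℂ) :
    pcomp F x y = MvPowerSeries.substAlgHom (hasSubst_pair hx hy) F := by
  have hmonomial (p : ℕ × ℕ) :
      (Finsupp.single (0 : Fin 2) p.1 + Finsupp.single 1 p.2).prod (fun s e => ![x, y] s ^ e) =
        x ^ p.1 * y ^ p.2 := by
    rw [Finsupp.prod_add_index' (fun _ => pow_zero _) (fun _ => pow_add _)]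
    simp
  ext n
  rw [MvPowerSeries.coe_substAlgHom, pcomp, coeff_mk, PowerSeries.coeff,
    MvPowerSeries.coeff_subst (hasSubst_pair hx hy),
    ← finsum_comp_equiv (finTwoArrowEquiv' ℕ).symm]
  simp only [finTwoArrowEquiv'_symm_apply_eq_single_add_single, hmonomial, smul_eq_mul]
  -- the terms outside the box vanish because `x ^ i * y ^ j` has order at least `i + j`
  rw [finsum_eq_sum_of_support_subset]
  intro p hp
  simp only [Finset.coe_product, Finset.coe_range, Set.mem_prod, Set.mem_Iio]
  by_contra hn
  exact hp (mul_eq_zero_of_right _ (coeff_pow_mul_pow_of_lt hx hy (by omega)))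

end Substitution

section Decomposition

variable {A B F : Type*} [CommRing A] [CommRing B] [FunLike F A B] [RingHomClass F A B] (φ : F)
  {f : A}

theorem map_mul_eq_of_mul_eq_add (hf : φ f = 0) {g P k D e : A} (h : g * P = k * D + f * e) :
    φ g * φ P = φ k * φ D := by
  rw [← map_mul, h, map_add, map_mul, map_mul, hf, zero_mul, add_zero]

theorem map_mul_sub_mul_eq (hf : φ f = 0) (H D E : A) : φ (H * D - f * E) = φ H * φ D := by
  rw [map_sub, map_mul, map_mul, hf, zero_mul, sub_zero]

end Decomposition

/-- **Polar excess versus GSV-index (local identity).**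
Suppose `g·ω = k·df + f·η` componentwise for `ω = P dx + Q dy` (with `η = ex dx + ey dy`),
and let `γ = (x, y)` be a formal parametrization with `f∘γ = 0`, `g∘γ ≠ 0`, `k∘γ ≠ 0`
and `(∂ₓf∘γ, ∂_yf∘γ) ≠ (0, 0)`. Then:
(1) for every `(a, b) ∈ ℂ²`, `(g∘γ)·((aP + bQ)∘γ) = (k∘γ)·((a∂ₓf + b∂_yf)∘γ)`;
(2) `min(ord_t(P∘γ), ord_t(Q∘γ)) = ord_t(k∘γ) − ord_t(g∘γ) + min(ord_t(∂ₓf∘γ), ord_t(∂_yf∘γ))`;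
(3) for any `H` with `H∘γ ≠ 0`, the relative polar excess
`(𝒫^ω, γ) − (𝒫^{d(f/H)}, γ)` equals `[ord_t(k∘γ) − ord_t(g∘γ)] + ord_t(H∘γ)`,
where `d(f/H)` has numerator components `(H∂ₓf − f∂ₓH, H∂_yf − f∂_yH)` and denominator `H²`. -/
theorem stmt_5 (P Q f g k ex ey : MvPowerSeries (Fin 2) ℂ)
    (hdecP : g * P = k * pderiv2 0 f + f * ex)
    (hdecQ : g * Q = k * pderiv2 1 f + f * ey)
    (x y : PowerSeries ℂ)
    (hx0 : PowerSeries.constantCoeff x = 0) (hy0 : PowerSeries.constantCoeff y = 0)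
    (hf : pcomp f x y = 0) (hg : pcomp g x y ≠ 0) (hk : pcomp k x y ≠ 0)
    (hdf : ¬(pcomp (pderiv2 0 f) x y = 0 ∧ pcomp (pderiv2 1 f) x y = 0)) :
    (∀ a b : ℂ,
        pcomp g x y * pcomp (a • P + b • Q) x y
          = pcomp k x y * pcomp (a • pderiv2 0 f + b • pderiv2 1 f) x y)
    ∧ ((min (pcomp P x y).order (pcomp Q x y).order).toNat : ℤ)
        = ((pcomp k x y).order.toNat : ℤ) - ((pcomp g x y).order.toNat : ℤ)
          + ((min (pcomp (pderiv2 0 f) x y).order (pcomp (pderiv2 1 f) x y).order).toNat : ℤ)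
    ∧ ∀ H : MvPowerSeries (Fin 2) ℂ, pcomp H x y ≠ 0 →
        ((min (pcomp P x y).order (pcomp Q x y).order).toNat : ℤ)
          - (((min (pcomp (H * pderiv2 0 f - f * pderiv2 0 H) x y).order
                (pcomp (H * pderiv2 1 f - f * pderiv2 1 H) x y).order).toNat : ℤ)
              - ((pcomp (H ^ 2) x y).order.toNat : ℤ))
        = (((pcomp k x y).order.toNat : ℤ) - ((pcomp g x y).order.toNat : ℤ))
          + ((pcomp H x y).order.toNat : ℤ) := by
  obtain ⟨φ, hφ⟩ : ∃ φ : MvPowerSeries (Fin 2) ℂ →ₐ[ℂ] PowerSeries ℂ, ∀ F, pcomp F x y = φ F :=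
    ⟨_, pcomp_eq_substAlgHom hx0 hy0⟩
  simp only [hφ] at hf hg hk hdf ⊢
  have hgP := map_mul_eq_of_mul_eq_add φ hf hdecP
  have hgQ := map_mul_eq_of_mul_eq_add φ hf hdecQ
  have hord := PowerSeries.toNat_min_order_eq hg hk hdf hgP hgQ
  refine ⟨fun a b => ?_, hord, fun H hH => ?_⟩
  · simp only [map_add, map_smul, mul_add, mul_smul_comm, hgP, hgQ]
  · rw [map_mul_sub_mul_eq φ hf, map_mul_sub_mul_eq φ hf, map_pow, sq,
      PowerSeries.toNat_min_order_mul_left hH hdf, PowerSeries.toNat_order_mul hH hH, hord]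
    push_cast
    ring
end

section
/- (Well-definedness of the formal GSV-index.) Let f, P, Q ∈ ℂ[[x,y]] and suppose two decompositions g₁P = k₁∂ₓf + fη₁ₓ, g₁Q = k₁∂_yf + fη₁_y and g₂P = k₂∂ₓf + fη₂ₓ, g₂Q = k₂∂_yf + fη₂_y hold with g₁, g₂, k₁, k₂, η₁ₓ, η₁_y, η₂ₓ, η₂_y ∈ ℂ[[x,y]]. Let γ be a formal parametrization with f∘γ = 0 and (∂ₓf∘γ, ∂_yf∘γ) ≠ (0,0). Then (g₂k₁)∘γ = (g₁k₂)∘γ. In particular, if g₁∘γ, g₂∘γ, k₁∘γ, k₂∘γ are all nonzero, then ord_t(k₁∘γ) − ord_t(g₁∘γ) = ord_t(k₂∘γ) − ord_t(g₂∘γ), so the formal GSV-index ord_t((k/g)∘γ) does not depend on the chosen decomposition gω = k df + fη. -/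
/-! Eliminating `P` and `Q` between the two decompositions gives, componentwise,
`(g₂k₁ - g₁k₂) ∂f = f (g₁η₂ - g₂η₁)`. Substitution of `γ` is a ring homomorphism (it is
Mathlib's `MvPowerSeries.subst`) that kills `f`, so `(g₂k₁ - g₁k₂)∘γ` times a nonzero component
of `∂f∘γ` vanishes in the domain `ℂ[[t]]`. The statement on orders follows because `ord_t` is
additive on nonzero series. -/

theorem PowerSeries.coeff_pow_mul_pow_of_lt_s6 {R : Type*} [CommSemiring R] {x y : PowerSeries R}
    (hx : PowerSeries.constantCoeff x = 0) (hy : PowerSeries.constantCoeff y = 0)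
    {p q n : ℕ} (h : n < p + q) : PowerSeries.coeff n (x ^ p * y ^ q) = 0 := by
  apply PowerSeries.coeff_of_lt_order
  calc (n : ℕ∞) < p + q := by exact_mod_cast h
    _ ≤ (x ^ p).order + (y ^ q).order :=
      add_le_add (PowerSeries.le_order_pow_of_constantCoeff_eq_zero p hx)
        (PowerSeries.le_order_pow_of_constantCoeff_eq_zero q hy)
    _ ≤ (x ^ p * y ^ q).order := PowerSeries.le_order_mul _ _

theorem pcomp_eq_subst {x y : PowerSeries ℂ}
    (hx : PowerSeries.constantCoeff x = 0) (hy : PowerSeries.constantCoeff y = 0)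
    (F : MvPowerSeries (Fin 2) ℂ) : pcomp F x y = MvPowerSeries.subst ![x, y] F := by
  have hsubst : MvPowerSeries.HasSubst ![x, y] :=
    MvPowerSeries.hasSubst_of_constantCoeff_zero (Fin.forall_fin_two.2 ⟨hx, hy⟩)
  let e : ℕ × ℕ → (Fin 2 →₀ ℕ) := fun p => Finsupp.single 0 p.1 + Finsupp.single 1 p.2
  have he : Function.Injective e := fun p q hpq => by
    simpa [e, Prod.ext_iff, Finsupp.single_apply] using
      And.intro (DFunLike.congr_fun hpq 0) (DFunLike.congr_fun hpq 1)
  ext n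
  rw [pcomp, PowerSeries.coeff_mk, PowerSeries.coeff_def (s := Finsupp.single () n) (by simp),
    MvPowerSeries.coeff_subst hsubst, ← PowerSeries.coeff_def (n := n) (by simp)]
  simp only [Finsupp.prod_fintype _ _ (fun _ => pow_zero _), Fin.prod_univ_two]
  rw [finsum_eq_finsetSum_of_support_subset
      (s := (Finset.range (n + 1) ×ˢ Finset.range (n + 1)).image e),
    Finset.sum_image he.injOn]
  · simp [e, smul_eq_mul]
  intro d hd
  have hd_eq : d = e (d 0, d 1) := by ext i; fin_cases i <;> simp [e]
  rw [hd_eq]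
  refine Finset.mem_coe.2 (Finset.mem_image_of_mem _ ?_)
  by_contra hlarge
  rw [Finset.mem_product, Finset.mem_range, Finset.mem_range, not_and_or] at hlarge
  apply hd
  simp only [Matrix.cons_val_zero, Matrix.cons_val_one]
  rw [PowerSeries.coeff_pow_mul_pow_of_lt_s6 hx hy (by omega), smul_zero]

section Decomposition

variable {A B : Type*} [CommRing A] [CommRing B] (φ : A →+* B)

theorem map_mul_mul_eq_of_decompositions {P f fx g₁ k₁ e₁ g₂ k₂ e₂ : A}
    (h₁ : g₁ * P = k₁ * fx + f * e₁) (h₂ : g₂ * P = k₂ * fx + f * e₂) (hf : φ f = 0) :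
    φ (g₂ * k₁) * φ fx = φ (g₁ * k₂) * φ fx := by
  have key : g₂ * k₁ * fx = g₁ * k₂ * fx + f * (g₁ * e₂ - g₂ * e₁) := by
    linear_combination g₁ * h₂ - g₂ * h₁
  rw [← map_mul, ← map_mul, key, map_add, map_mul φ f, hf, zero_mul, add_zero]

theorem map_mul_eq_of_decompositions [NoZeroDivisors B]
    {P Q f fx fy g₁ k₁ e₁x e₁y g₂ k₂ e₂x e₂y : A}
    (h1P : g₁ * P = k₁ * fx + f * e₁x) (h1Q : g₁ * Q = k₁ * fy + f * e₁y)
    (h2P : g₂ * P = k₂ * fx + f * e₂x) (h2Q : g₂ * Q = k₂ * fy + f * e₂y)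
    (hf : φ f = 0) (hdf : φ fx ≠ 0 ∨ φ fy ≠ 0) :
    φ (g₂ * k₁) = φ (g₁ * k₂) := by
  rcases hdf with hfx | hfy
  · exact mul_right_cancel₀ hfx (map_mul_mul_eq_of_decompositions φ h1P h2P hf)
  · exact mul_right_cancel₀ hfy (map_mul_mul_eq_of_decompositions φ h1Q h2Q hf)

end Decomposition

theorem PowerSeries.order_sub_order_eq_of_mul_eq {R : Type*} [CommRing R] [IsDomain R]
    {g₁ k₁ g₂ k₂ : PowerSeries R} (h : g₂ * k₁ = g₁ * k₂)
    (hg₁ : g₁ ≠ 0) (hg₂ : g₂ ≠ 0) (hk₁ : k₁ ≠ 0) (hk₂ : k₂ ≠ 0) :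
    (k₁.order.toNat : ℤ) - g₁.order.toNat = (k₂.order.toNat : ℤ) - g₂.order.toNat := by
  have horder := congrArg (fun φ : PowerSeries R => φ.order.toNat) h
  have ne_top {φ : PowerSeries R} (hφ : φ ≠ 0) : φ.order ≠ ⊤ := PowerSeries.order_eq_top.not.2 hφ
  simp only [PowerSeries.order_mul, ENat.toNat_add (ne_top hg₂) (ne_top hk₁),
    ENat.toNat_add (ne_top hg₁) (ne_top hk₂)] at horder
  omega

/-- **Well-definedness of the formal GSV-index.**
Given two decompositions `g₁ω = k₁df + fη₁` and `g₂ω = k₂df + fη₂` of `ω = P dx + Q dy`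
(componentwise), and a formal parametrization `γ = (x, y)` with `f∘γ = 0` and
`(∂ₓf∘γ, ∂_yf∘γ) ≠ (0, 0)`, one has `(g₂k₁)∘γ = (g₁k₂)∘γ`; in particular, if
`g₁∘γ, g₂∘γ, k₁∘γ, k₂∘γ` are all nonzero, then
`ord_t(k₁∘γ) − ord_t(g₁∘γ) = ord_t(k₂∘γ) − ord_t(g₂∘γ)`, so the formal GSV-index
does not depend on the chosen decomposition. -/
theorem stmt_6 (P Q f g₁ k₁ e₁x e₁y g₂ k₂ e₂x e₂y : MvPowerSeries (Fin 2) ℂ)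
    (h1P : g₁ * P = k₁ * pderiv2 0 f + f * e₁x)
    (h1Q : g₁ * Q = k₁ * pderiv2 1 f + f * e₁y)
    (h2P : g₂ * P = k₂ * pderiv2 0 f + f * e₂x)
    (h2Q : g₂ * Q = k₂ * pderiv2 1 f + f * e₂y)
    (x y : PowerSeries ℂ)
    (hx0 : PowerSeries.constantCoeff x = 0) (hy0 : PowerSeries.constantCoeff y = 0)
    (hf : pcomp f x y = 0)
    (hdf : ¬(pcomp (pderiv2 0 f) x y = 0 ∧ pcomp (pderiv2 1 f) x y = 0)) :
    pcomp (g₂ * k₁) x y = pcomp (g₁ * k₂) x y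
    ∧ (pcomp g₁ x y ≠ 0 → pcomp g₂ x y ≠ 0 → pcomp k₁ x y ≠ 0 → pcomp k₂ x y ≠ 0 →
        ((pcomp k₁ x y).order.toNat : ℤ) - ((pcomp g₁ x y).order.toNat : ℤ)
          = ((pcomp k₂ x y).order.toNat : ℤ) - ((pcomp g₂ x y).order.toNat : ℤ)) := by
  have hsubst : MvPowerSeries.HasSubst ![x, y] :=
    MvPowerSeries.hasSubst_of_constantCoeff_zero (Fin.forall_fin_two.2 ⟨hx0, hy0⟩)
  let γ : MvPowerSeries (Fin 2) ℂ →+* PowerSeries ℂ :=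
    (MvPowerSeries.substAlgHom (R := ℂ) hsubst).toRingHom
  have hγ (F : MvPowerSeries (Fin 2) ℂ) : pcomp F x y = γ F :=
    (pcomp_eq_subst hx0 hy0 F).trans (MvPowerSeries.substAlgHom_apply hsubst F).symm
  simp only [hγ] at hf hdf ⊢
  have hcross : γ (g₂ * k₁) = γ (g₁ * k₂) :=
    map_mul_eq_of_decompositions γ h1P h1Q h2P h2Q hf (not_and_or.1 hdf)
  refine ⟨hcross, fun hg₁ hg₂ hk₁ hk₂ => ?_⟩
  rw [map_mul, map_mul] at hcross
  exact PowerSeries.order_sub_order_eq_of_mul_eq hcross hg₁ hg₂ hk₁ hk₂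
end

section
/- Let ω be a primitive cube root of unity, let ℤ[ω] be the ring of Eisenstein integers, and let N(a + bω) = a² − ab + b² be the norm. Then for all α, β ∈ ℤ[ω]: (N(α) + N(β) + N(α − β) + N(α + ωβ))² = 3·(N(α)² + N(β)² + N(α − β)² + N(α + ωβ)²). (This identity underlies the paper's computation of the degree d₀ = N(α₁) + N(β₁) + N(α₁ − β₁) + N(α₁ + ωβ₁) of the generic invariant curve of the Lins Neto pencil from the formula d₀ = 3 + √(9 + 3Σᵢ(Nᵢ² − 2Nᵢ)).) -/
/-- **The norm identity behind the degree of the Lins Neto pencil.**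
Let `ω` be a primitive cube root of unity (so `ω² + ω + 1 = 0`), and consider the
Eisenstein integers `α = a + bω`, `β = c + dω` with norm `N(a + bω) = a² − ab + b²`.
If `e + fω = α + ωβ` (so that `(e, f)` are the coordinates of `α + ωβ`, while `α − β`
has coordinates `(a − c, b − d)`), then
`(N(α) + N(β) + N(α − β) + N(α + ωβ))² = 3·(N(α)² + N(β)² + N(α − β)² + N(α + ωβ)²)`. -/
theorem stmt_11 (ω : ℂ) (hω : ω ^ 2 + ω + 1 = 0)
    (N : ℤ → ℤ → ℤ) (hN : ∀ a b : ℤ, N a b = a ^ 2 - a * b + b ^ 2)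
    (a b c d e f : ℤ)
    (hef : ((e : ℂ) + f * ω) = ((a : ℂ) + b * ω) + ω * ((c : ℂ) + d * ω)) :
    (N a b + N c d + N (a - c) (b - d) + N e f) ^ 2
      = 3 * ((N a b) ^ 2 + (N c d) ^ 2 + (N (a - c) (b - d)) ^ 2 + (N e f) ^ 2) := by
  set x : ℤ := e - a + d with hx
  set y : ℤ := f - b - c + d with hy
  have hxy : (x : ℂ) + y * ω = 0 := by
    have h2 : ω ^ 2 = -ω - 1 := by linear_combination hω
    push_cast [hx, hy]
    linear_combination hef + ((d : ℂ)) * h2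
  -- (y - 2x)^2 = -3 y^2 over ℂ, since (2ω+1)^2 = -3
  have key : ((y - 2 * x : ℤ) : ℂ) ^ 2 = ((-3 * y ^ 2 : ℤ) : ℂ) := by
    push_cast
    linear_combination (4 * (y:ℂ)^2) * hω + (-4*((y:ℂ) - x + y*ω)) * hxy
  have keyZ : (y - 2 * x) ^ 2 = -3 * y ^ 2 := by exact_mod_cast key
  have hy0 : y = 0 := by nlinarith [sq_nonneg (y - 2 * x), sq_nonneg y]
  have hx0 : x = 0 := by nlinarith [keyZ, hy0]
  have he : e = a - d := by omega
  have hf : f = b + c - d := by omega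
  subst he hf
  simp only [hN]
  ring
end
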